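/- Let F be the infinite (a,m,h)-staircase and G the infinite (a',m',h')-staircase. If a + m < a' and G(a') < F(a'), then G(i) ≤ F(i) for all i ≥ a'. -/

import Mathlib

/-- `C2 n = n(n−1)/2`. -/
def C2 (n : ℤ) : ℤ := n * (n - 1) / 2

/-- The infinite `(a,m,h)`-staircase, intended for arguments `i ≥ a`:
the weakly increasing function whose values are `m+1` copies of `h` followed by,
for each `p ≥ 1`, `h+p−1` copies of `h+p`.  Equivalently, `staircase a m h i` is
the least `n ≥ h` with `i ≤ a + m + C2 n − C2 h`. -/
noncomputable def staircase (a m h i : ℤ) : ℤ :=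
  sInf {n : ℤ | h ≤ n ∧ i ≤ a + m + C2 n - C2 h}

/-!
The last index at which the `(a,m,h)`-staircase takes the value `n ≥ h` is
`a + m + C2 n - C2 h`, so `staircase a m h i ≤ n ↔ i ≤ a + m + C2 n - C2 h`. Write `F` and `G`
for the two staircases, `f = F a'` and `g = G a'`. Since `a + m < a'`, `F` has left its initial
run at `a'`, so `F` reached level `f - 1` for the last time before `a'`, while `G` is still at
level `g ≤ f - 1` at `a'`. From level `f - 1` (resp. `g`) on, `F` needs `C2 n - C2 (f - 1)` more
steps to finish level `n` and `G` needs `C2 n - C2 g ≥ C2 n - C2 (f - 1)`, so `F` finishes every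
level `n ≥ f` no later than `G` does.
-/

lemma two_mul_C2 (n : ℤ) : 2 * C2 n = n * (n - 1) :=
  Int.two_mul_ediv_two_of_even (Int.even_mul_pred_self n)

lemma C2_le_C2 {p q : ℤ} (hp : 0 ≤ p) (hpq : p ≤ q) : C2 p ≤ C2 q := by
  nlinarith [two_mul_C2 p, two_mul_C2 q, mul_nonneg (sub_nonneg.2 hpq) hp,
    mul_nonneg (sub_nonneg.2 hpq) (sub_nonneg.2 hpq)]

lemma sub_one_le_C2 (n : ℤ) : n - 1 ≤ C2 n := by
  have : 0 ≤ (n - 1) * (n - 2) := by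
    rcases le_or_gt n 1 with hn | hn
    · exact mul_nonneg_of_nonpos_of_nonpos (by omega) (by omega)
    · exact mul_nonneg (by omega) (by omega)
  nlinarith [two_mul_C2 n]

section staircase

variable {a m h i n : ℤ}

lemma staircase_bddBelow : BddBelow {n : ℤ | h ≤ n ∧ i ≤ a + m + C2 n - C2 h} :=
  ⟨h, fun _ hn => hn.1⟩

lemma staircase_nonempty :
    {n : ℤ | h ≤ n ∧ i ≤ a + m + C2 n - C2 h}.Nonempty := by
  set n := max h (i - a - m + C2 h + 1)
  refine ⟨n, le_max_left _ _, ?_⟩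
  linarith [sub_one_le_C2 n, le_max_right h (i - a - m + C2 h + 1)]

lemma staircase_mem :
    h ≤ staircase a m h i ∧ i ≤ a + m + C2 (staircase a m h i) - C2 h :=
  Int.csInf_mem staircase_nonempty staircase_bddBelow

lemma le_staircase : h ≤ staircase a m h i :=
  staircase_mem.1

lemma staircase_le_iff (hh : 0 ≤ h) (hn : h ≤ n) :
    staircase a m h i ≤ n ↔ i ≤ a + m + C2 n - C2 h := by
  refine ⟨fun hle => ?_, fun hi => csInf_le staircase_bddBelow ⟨hn, hi⟩⟩
  linarith [(staircase_mem (a := a) (m := m) (h := h) (i := i)).2,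
    C2_le_C2 (hh.trans le_staircase) hle]

lemma staircase_mono (hh : 0 ≤ h) : Monotone (staircase a m h) := fun _ _ hij =>
  (staircase_le_iff hh le_staircase).2 (hij.trans ((staircase_le_iff hh le_staircase).1 le_rfl))

lemma lt_staircase_of_lt (hh : 0 ≤ h) (hi : a + m < i) : h < staircase a m h i := by
  by_contra! hle
  have := (staircase_le_iff hh le_rfl).1 hle
  omega

end staircase

theorem staircase_le_staircase_of_lt {a m h a' m' h' j : ℤ} (hh : 0 ≤ h) (hh' : 0 ≤ h')
    (hj : a + m < j) (hlt : staircase a' m' h' j < staircase a m h j) {i : ℤ} (hji : j ≤ i) :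
    staircase a' m' h' i ≤ staircase a m h i := by
  set f := staircase a m h j
  set g := staircase a' m' h' j
  set n := staircase a m h i
  have hf : h < f := lt_staircase_of_lt hh hj
  have hg : h' ≤ g := le_staircase
  have hfn : f ≤ n := staircase_mono hh hji
  have hF_prev : a + m + C2 (f - 1) - C2 h < j :=
    not_le.1 fun hle => by linarith [(staircase_le_iff hh (by omega)).2 hle]
  have hG_cur : j ≤ a' + m' + C2 g - C2 h' := (staircase_le_iff hh' hg).1 le_rfl
  have hF_cur : i ≤ a + m + C2 n - C2 h := (staircase_le_iff hh (by omega)).1 le_rfl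
  have hC2 : C2 g ≤ C2 (f - 1) := C2_le_C2 (by omega) (by omega)
  exact (staircase_le_iff hh' (by omega)).2 (by linarith)

theorem stmt12_general (a m h a' m' h' : ℤ) (hh : 0 ≤ h) (hh' : 0 ≤ h')
    (h1 : a + m < a') (h2 : staircase a' m' h' a' < staircase a m h a') :
    ∀ i, a' ≤ i → staircase a' m' h' i ≤ staircase a m h i :=
  fun _ hi => staircase_le_staircase_of_lt hh hh' h1 h2 hi

theorem stmt12 (a m h a' m' h' : ℤ) (hm : 0 ≤ m) (hh : 0 ≤ h) (hm' : 0 ≤ m') (hh' : 0 ≤ h')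
    (h1 : a + m < a') (h2 : staircase a' m' h' a' < staircase a m h a') :
    ∀ i, a' ≤ i → staircase a' m' h' i ≤ staircase a m h i :=
  stmt12_general a m h a' m' h' hh hh' h1 h2
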